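/- Let q be an odd prime power, λ the canonical additive character of F_q, m ≥ 0 an integer, and β ∈ F_q. Then ∑_{a ∈ F_q^*} λ(−aβ)·K(λ; a²)^m = q·δ(m,q;β) − (q−1)^m, where δ(m,q;β) is the number of m-tuples (α₁,…,α_m) ∈ (F_q^*)^m with ∑_{j=1}^m (α_j + α_j⁻¹) = β (and δ(0,q;β) = 1 if β = 0, else 0). -/

import Mathlib

variable {F : Type*} [Field F] [Fintype F] [DecidableEq F]

/-- The Kloosterman sum `K(λ; b) = ∑_{α ∈ F_q^*} λ(α + bα⁻¹)`. -/
noncomputable def kloosterman (lam : AddChar F ℂ) (b : F) : ℂ :=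
  ∑ α : Fˣ, lam ((α : F) + b * ((α⁻¹ : Fˣ) : F))

/-- `δ(m,q;β)`: the number of `m`-tuples `(α₁,…,α_m) ∈ (F_q^*)^m` with
`∑ (α_j + α_j⁻¹) = β`.  For `m = 0` this is `1` if `β = 0` and `0` otherwise. -/
noncomputable def deltaCount (m : ℕ) (β : F) : ℕ :=
  Nat.card {f : Fin m → Fˣ // ∑ j, (((f j : F)) + (((f j)⁻¹ : Fˣ) : F)) = β}

omit [Fintype F] [DecidableEq F] in
lemma addchar_map_sum (lam : AddChar F ℂ) {ι : Type*} (s : Finset ι) (f : ι → F) :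
    lam (∑ i ∈ s, f i) = ∏ i ∈ s, lam (f i) := by
  induction s using Finset.cons_induction with
  | empty => simp
  | cons a s ha ih => simp [Finset.sum_cons, Finset.prod_cons, AddChar.map_add_eq_mul, ih]

lemma sum_units_eq (g : F → ℂ) : ∑ a : Fˣ, g (a : F) = (∑ x : F, g x) - g 0 := by
  rw [← Equiv.sum_comp unitsEquivNeZero.symm (fun a : Fˣ => g a)]
  have h1 : ∑ x : {a : F // a ≠ 0}, g ((unitsEquivNeZero.symm x : Fˣ) : F)
      = ∑ x : {a : F // a ≠ 0}, g x :=
    Finset.sum_congr rfl fun x _ => by congr 1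
  rw [h1, ← Finset.sum_subtype (Finset.univ.erase 0) (by simp) g,
    ← Finset.add_sum_erase Finset.univ g (Finset.mem_univ 0)]
  ring

lemma kl_sq (lam : AddChar F ℂ) (a : Fˣ) :
    kloosterman lam ((a : F) ^ 2)
      = ∑ γ : Fˣ, lam ((a : F) * ((γ : F) + ((γ⁻¹ : Fˣ) : F))) := by
  unfold kloosterman
  rw [← Equiv.sum_comp (Equiv.mulLeft a)]
  refine Finset.sum_congr rfl fun γ _ => ?_
  congr 1
  simp only [Equiv.coe_mulLeft, Units.val_mul, mul_inv_rev, Units.val_inv_eq_inv_val]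
  have ha : (a : F) ≠ 0 := a.ne_zero
  have hg : (γ : F) ≠ 0 := γ.ne_zero
  field_simp

/-- for `q` odd, `λ` the canonical (primitive) additive character,
`m ≥ 0` and `β ∈ F_q`:
`∑_{a ∈ F_q^*} λ(−aβ)·K(λ; a²)^m = q·δ(m,q;β) − (q−1)^m`. -/
theorem sum_kloosterman_square_pow (hodd : Odd (Fintype.card F))
    (lam : AddChar F ℂ) (hlam : lam.IsPrimitive) (m : ℕ) (β : F)
    (q : ℕ) (hq : q = Fintype.card F) :
    ∑ a : Fˣ, lam (-(a : F) * β) * kloosterman lam ((a : F) ^ 2) ^ m =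
      (q : ℂ) * (deltaCount m β : ℕ) - ((q : ℂ) - 1) ^ m := by
  set s : Fˣ → F := fun γ => (γ : F) + ((γ⁻¹ : Fˣ) : F) with hs
  set S : (Fin m → Fˣ) → F := fun f => ∑ j, s (f j) with hS
  have step1 : ∀ a : Fˣ, lam (-(a : F) * β) * kloosterman lam ((a : F) ^ 2) ^ m
      = ∑ f : Fin m → Fˣ, lam ((a : F) * (S f - β)) := by
    intro a
    rw [kl_sq, Fintype.sum_pow, Finset.mul_sum]
    refine Finset.sum_congr rfl fun f _ => ?_
    have : ∏ j : Fin m, lam ((a : F) * s (f j)) = lam ((a : F) * S f) := by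
      rw [hS, Finset.mul_sum, addchar_map_sum]
    rw [this, ← AddChar.map_add_eq_mul]
    congr 1
    ring
  simp_rw [step1]
  rw [Finset.sum_comm]
  have step2 : ∀ f : Fin m → Fˣ, ∑ a : Fˣ, lam ((a : F) * (S f - β))
      = (if S f - β = 0 then (Fintype.card F : ℂ) else 0) - 1 := by
    intro f
    rw [sum_units_eq (fun x => lam (x * (S f - β)))]
    rw [AddChar.sum_mulShift _ hlam]
    simp [apply_ite]
  simp_rw [step2, sub_eq_zero]
  rw [Finset.sum_sub_distrib]
  have hcount : (∑ f : Fin m → Fˣ, if S f = β then (Fintype.card F : ℂ) else 0)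
      = (deltaCount m β : ℂ) * (Fintype.card F : ℂ) := by
    rw [← Finset.sum_filter, Finset.sum_const, nsmul_eq_mul]
    congr 2
    rw [deltaCount, Nat.card_eq_fintype_card, Fintype.card_subtype]
  rw [hcount]
  have hcard : (∑ _f : Fin m → Fˣ, (1 : ℂ)) = ((Fintype.card F : ℂ) - 1) ^ m := by
    rw [Finset.sum_const, nsmul_eq_mul, mul_one, Finset.card_univ, Fintype.card_fun,
      Fintype.card_units, Fintype.card_fin, Nat.cast_pow, Nat.cast_sub Fintype.card_pos]
    push_cast
    ring
  rw [hcard, hq]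
  ring
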